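/- arXiv:2005.11484 — 8 statements merged into one kernel-verified Lean document; each statement's English description precedes it below -/
import Mathlib

section
/- Let S be a right uniform semigroup and suppose xy = y for some x, y ∈ S. Then x is a left identity of S or y is a left zero element of S. -/
/-!
If `x * y = y` with `y` not a left zero, then the fixed points of `s ↦ x * s` form a nonzero
subact. Sending `a` to the tail filter of its orbit `a, x a, x² a, …` is a homomorphism into an
act of filters which is injective on the fixed points (they go to `pure`), hence injective by
uniformity; since `a` and `x a` have the same tail filter, `x a = a` for all `a`.
-/

universe u

/-- A right action of a semigroup `S` on a set `A`. -/
def IsRightAct (S : Type u) [Semigroup S] {A : Type u} (act : A → S → A) : Prop :=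
  ∀ (a : A) (s t : S), act a (s * t) = act (act a s) t

/-- An `S`-homomorphism between right `S`-acts. -/
def IsActHom {S : Type u} [Semigroup S] {A B : Type u} (actA : A → S → A)
    (actB : B → S → B) (f : A → B) : Prop :=
  ∀ (a : A) (s : S), f (actA a s) = actB (f a) s

/-- A zero element of a right `S`-act. -/
def IsZeroElem {S : Type u} [Semigroup S] {A : Type u} (act : A → S → A) (θ : A) : Prop :=
  ∀ s : S, act θ s = θ

/-- A subact of a right `S`-act. -/
def IsSubact {S : Type u} [Semigroup S] {A : Type u} (act : A → S → A) (B : Set A) : Prop :=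
  B.Nonempty ∧ ∀ b ∈ B, ∀ s : S, act b s ∈ B

/-- `B` is large in `A`: every `S`-homomorphism from `A` injective on `B` is injective. -/
def LargeIn {S : Type u} [Semigroup S] {A : Type u} (act : A → S → A) (B : Set A) : Prop :=
  ∀ (C : Type u) (actC : C → S → C), IsRightAct S actC →
    ∀ f : A → C, IsActHom act actC f → Set.InjOn f B → Function.Injective f

/-- A right `S`-act is uniform if every nonzero subact is large. -/
def UniformAct {S : Type u} [Semigroup S] {A : Type u} (act : A → S → A) : Prop :=
  ∀ B : Set A, IsSubact act B → (∃ b ∈ B, ¬ IsZeroElem act b) → LargeIn act B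

/-- A semigroup is right uniform if `S` as a right `S`-act over itself is uniform. -/
def RightUniform (S : Type u) [Semigroup S] : Prop :=
  UniformAct (fun (a : S) (s : S) => a * s)

open Filter

namespace IsRightAct

variable {S : Type u} [Semigroup S] {A : Type u} {act : A → S → A}

theorem filterMap (hact : IsRightAct S act) :
    IsRightAct S (fun (F : Filter A) s => F.map (act · s)) := by
  intro F s t
  simp only [Filter.map_map]
  congr 1
  funext a
  exact hact a s t

end IsRightAct

section EventualOrbit

variable {S : Type u} [Semigroup S] {A : Type u} {act : A → S → A}

def eventualOrbit (g : A → A) (a : A) : Filter A :=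
  atTop.map fun n => g^[n] a

theorem eventualOrbit_apply_self (g : A → A) (a : A) :
    eventualOrbit g (g a) = eventualOrbit g a := by
  have shift : (fun n => g^[n] (g a)) = (fun n => g^[n] a) ∘ (· + 1) := by
    funext n
    exact (Function.iterate_succ_apply g n a).symm
  rw [eventualOrbit, shift, ← Filter.map_map, Filter.map_add_atTop_eq_nat, eventualOrbit]

theorem eventualOrbit_of_isFixedPt {g : A → A} {a : A} (ha : Function.IsFixedPt g a) :
    eventualOrbit g a = pure a := by
  simp only [eventualOrbit, Function.iterate_fixed ha, Filter.map_const]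

theorem isActHom_eventualOrbit {g : A → A} (hg : IsActHom act act g) :
    IsActHom act (fun (F : Filter A) s => F.map (act · s)) (eventualOrbit g) := by
  intro a s
  have commute : Function.Commute g (act · s) := fun b => hg b s
  simp only [eventualOrbit, Filter.map_map]
  congr 1
  funext n
  exact commute.iterate_left n a

end EventualOrbit

theorem IsActHom.isSubact_fixedPoints {S : Type u} [Semigroup S] {A : Type u}
    {act : A → S → A} {g : A → A} (hg : IsActHom act act g) {a : A}
    (ha : Function.IsFixedPt g a) : IsSubact act (Function.fixedPoints g) :=
  ⟨⟨a, ha⟩, fun b hb s => (hg b s).trans (congrArg (act · s) hb)⟩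

theorem UniformAct.eq_id_of_isFixedPt {S : Type u} [Semigroup S] {A : Type u}
    {act : A → S → A} (hu : UniformAct act) (hact : IsRightAct S act) {g : A → A}
    (hg : IsActHom act act g) {a : A} (ha : Function.IsFixedPt g a)
    (ha₀ : ¬ IsZeroElem act a) : g = id := by
  have large : LargeIn act (Function.fixedPoints g) :=
    hu _ (hg.isSubact_fixedPoints ha) ⟨a, ha, ha₀⟩
  have injOn : Set.InjOn (eventualOrbit g) (Function.fixedPoints g) := by
    intro b hb c hc hbc
    rw [eventualOrbit_of_isFixedPt hb, eventualOrbit_of_isFixedPt hc] at hbc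
    exact Filter.pure_injective hbc
  have inj := large _ _ hact.filterMap _ (isActHom_eventualOrbit hg) injOn
  funext b
  exact inj (eventualOrbit_apply_self g b)

theorem stmt0 {S : Type u} [Semigroup S] (hu : RightUniform S) (x y : S)
    (h : x * y = y) : (∀ s : S, x * s = s) ∨ (∀ s : S, y * s = y) := by
  by_cases hy : IsZeroElem (fun (a : S) (s : S) => a * s) y
  · exact Or.inr hy
  left
  intro s
  have hg : IsActHom (fun (a : S) (s : S) => a * s) (fun a s => a * s) (x * ·) :=
    fun a t => (mul_assoc x a t).symm
  have hact : IsRightAct S (fun (a : S) (s : S) => a * s) := fun a s t => (mul_assoc a s t).symm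
  exact congrFun (hu.eq_id_of_isFixedPt hact hg h hy) s
end

section
/- Let S be a commutative semigroup whose ideals form a chain under inclusion. Then S is uniform if and only if for all x, y ∈ S, xy = y implies x is an identity element of S or y is a zero element of S. -/
universe u

/-!
For `x * y = y` with `y` not a left zero, collapse each element `a` of `S` with `x * a`: this
congruence of `S_S` is trivial on the right ideal `y S¹`, which `x` fixes pointwise, so
uniformity forces it to be trivial everywhere and `x` is a left identity.

Conversely, let `f` be injective on a nonzero subact `B ∋ b` with `f a = f a'`. In a chain
semigroup we may assume `a' = a s`, and either `a ∈ b S¹ ⊆ B`, so `a = a'` at once, or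
`b ∈ a S¹`, so `f b = f (b s)` and `b = b s`. Then `s` is an identity, since `b` is not a zero.
-/

section IterateEq

variable {α : Type u} (g : α → α)

def iterateEqSetoid : Setoid α where
  r a b := ∃ n m : ℕ, g^[n] a = g^[m] b
  iseqv :=
    ⟨fun _ => ⟨0, 0, rfl⟩, fun ⟨n, m, h⟩ => ⟨m, n, h.symm⟩,
      fun {a b c} ⟨n, m, h₁⟩ ⟨k, l, h₂⟩ => ⟨k + n, m + l, by
        rw [Function.iterate_add_apply, h₁, ← Function.iterate_add_apply, Nat.add_comm k m,
          Function.iterate_add_apply, h₂, ← Function.iterate_add_apply]⟩⟩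

variable {g}

theorem iterateEqSetoid_apply_self (a : α) : iterateEqSetoid g (g a) a :=
  ⟨0, 1, rfl⟩

theorem eq_of_iterateEqSetoid {p q : α} (hp : Function.IsFixedPt g p)
    (hq : Function.IsFixedPt g q) (h : iterateEqSetoid g p q) : p = q := by
  obtain ⟨n, m, h⟩ := h
  rwa [Function.iterate_fixed hp, Function.iterate_fixed hq] at h

theorem iterateEqSetoid_map {h : α → α} (hc : Function.Semiconj h g g) {a b : α}
    (hab : iterateEqSetoid g a b) : iterateEqSetoid g (h a) (h b) := by
  obtain ⟨n, m, hnm⟩ := hab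
  exact ⟨n, m, by rw [← (hc.iterate_right n).eq, ← (hc.iterate_right m).eq, hnm]⟩

end IterateEq

section Semigroup

variable {S : Type u} [Semigroup S]

def principalRightIdeal (a : S) : Set S :=
  insert a (Set.range (a * ·))

theorem mem_principalRightIdeal_self (a : S) : a ∈ principalRightIdeal a :=
  Set.mem_insert a _

theorem isSubact_principalRightIdeal (a : S) :
    IsSubact (fun c s : S => c * s) (principalRightIdeal a) := by
  refine ⟨⟨a, mem_principalRightIdeal_self a⟩, ?_⟩
  rintro c (rfl | ⟨u, rfl⟩) s
  · exact Or.inr ⟨s, rfl⟩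
  · exact Or.inr ⟨u * s, (mul_assoc a u s).symm⟩

theorem principalRightIdeal_subset {B : Set S} (hB : IsSubact (fun c s : S => c * s) B)
    {a : S} (ha : a ∈ B) : principalRightIdeal a ⊆ B := by
  rintro c (rfl | ⟨u, rfl⟩)
  exacts [ha, hB.2 a ha u]

theorem mul_eq_self_of_mem_principalRightIdeal {x y c : S} (hxy : x * y = y)
    (hc : c ∈ principalRightIdeal y) : x * c = c := by
  rcases hc with rfl | ⟨u, rfl⟩
  exacts [hxy, by rw [← mul_assoc, hxy]]

theorem mem_principalRightIdeal_or_mem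
    (hchain : ∀ I J : Set S, IsSubact (fun c s : S => c * s) I →
      IsSubact (fun c s : S => c * s) J → I ⊆ J ∨ J ⊆ I) (a b : S) :
    a ∈ principalRightIdeal b ∨ b ∈ principalRightIdeal a :=
  (hchain _ _ (isSubact_principalRightIdeal a) (isSubact_principalRightIdeal b)).imp
    (· (mem_principalRightIdeal_self a)) (· (mem_principalRightIdeal_self b))

def iterateEqQuotientAct (x : S) (c : Quotient (iterateEqSetoid (x * ·))) (t : S) :
    Quotient (iterateEqSetoid (x * ·)) :=
  Quotient.map' (· * t)
    (fun _ _ => iterateEqSetoid_map (h := (· * t)) fun a => mul_assoc x a t) c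

theorem isRightAct_iterateEqQuotientAct (x : S) : IsRightAct S (iterateEqQuotientAct x) := by
  intro c s t
  induction c using Quotient.ind with
  | _ a => exact congrArg (Quotient.mk _) (mul_assoc a s t).symm

theorem isActHom_mk_iterateEqSetoid (x : S) :
    IsActHom (fun a s : S => a * s) (iterateEqQuotientAct x) (Quotient.mk _) :=
  fun _ _ => rfl

theorem RightUniform.mul_eq_self {x y : S} (hu : RightUniform S) (hxy : x * y = y)
    (hy : ¬ IsZeroElem (fun a s : S => a * s) y) (t : S) : x * t = t := by
  unfold RightUniform UniformAct LargeIn at hu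
  have hinjOn : Set.InjOn (Quotient.mk (iterateEqSetoid (x * ·))) (principalRightIdeal y) :=
    fun p hp q hq hpq => eq_of_iterateEqSetoid (mul_eq_self_of_mem_principalRightIdeal hxy hp)
      (mul_eq_self_of_mem_principalRightIdeal hxy hq) (Quotient.exact hpq)
  have hinj := hu _ (isSubact_principalRightIdeal y) ⟨y, mem_principalRightIdeal_self y, hy⟩ _
    _ (isRightAct_iterateEqQuotientAct x) _ (isActHom_mk_iterateEqSetoid x) hinjOn
  exact hinj (Quotient.sound (iterateEqSetoid_apply_self t))

end Semigroup

section CommSemigroup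

variable {S : Type u} [CommSemigroup S]

theorem IsActHom.map_eq_map_mul_of_mem_principalRightIdeal {C : Type u} {actC : C → S → C}
    {f : S → C} (hf : IsActHom (fun a s : S => a * s) actC f) {a s c : S}
    (has : f a = f (a * s)) (hc : c ∈ principalRightIdeal a) : f c = f (c * s) := by
  rcases hc with rfl | ⟨u, rfl⟩
  · exact has
  · rw [hf, has, ← hf, mul_right_comm]

theorem rightUniform_of_chain
    (hchain : ∀ a b : S, a ∈ principalRightIdeal b ∨ b ∈ principalRightIdeal a)
    (hcond : ∀ x y : S, x * y = y →
      (∀ s : S, x * s = s) ∨ IsZeroElem (fun a s : S => a * s) y) :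
    RightUniform S := by
  unfold RightUniform UniformAct LargeIn
  rintro B hB ⟨b, hbB, hb⟩ C actC - f hf hinj
  have eq_mul_of_map_eq {a s : S} (has : f a = f (a * s)) : a = a * s := by
    rcases hchain a b with hab | hba
    · have haB := principalRightIdeal_subset hB hbB hab
      exact hinj haB (hB.2 a haB s) has
    · have hbs : b * s = b :=
        (hinj hbB (hB.2 b hbB s) (hf.map_eq_map_mul_of_mem_principalRightIdeal has hba)).symm
      rcases hcond s b (by rw [mul_comm, hbs]) with hs | hz
      · rw [mul_comm, hs]
      · exact absurd hz hb
  intro a a' h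
  rcases hchain a a' with (rfl | ⟨s, rfl⟩) | (rfl | ⟨s, rfl⟩)
  · rfl
  · exact (eq_mul_of_map_eq h.symm).symm
  · rfl
  · exact eq_mul_of_map_eq h

end CommSemigroup

theorem stmt2 {S : Type u} [CommSemigroup S]
    (hchain : ∀ I J : Set S, (I.Nonempty ∧ ∀ a ∈ I, ∀ s : S, a * s ∈ I) →
      (J.Nonempty ∧ ∀ a ∈ J, ∀ s : S, a * s ∈ J) → I ⊆ J ∨ J ⊆ I) :
    RightUniform S ↔ ∀ x y : S, x * y = y →
      (∀ s : S, x * s = s ∧ s * x = s) ∨ (∀ s : S, y * s = y ∧ s * y = y) := by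
  constructor
  · intro hu x y hxy
    by_cases hy : IsZeroElem (fun a s : S => a * s) y
    · exact Or.inr fun s => ⟨hy s, (mul_comm s y).trans (hy s)⟩
    · have hx := hu.mul_eq_self hxy hy
      exact Or.inl fun s => ⟨hx s, by rw [mul_comm, hx]⟩
  · intro hcond
    refine rightUniform_of_chain (mem_principalRightIdeal_or_mem hchain) fun x y hxy => ?_
    exact (hcond x y hxy).imp (fun hx s => (hx s).1) fun hy s => (hy s).1
end

section
/- For a semigroup S, if the monoid S¹ (S with identity adjoined if necessary) is right uniform, then S is right uniform. -/
universe u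

/-!
Given a nonzero right ideal `B` of `S` and a homomorphism `f : S → C` of right `S`-acts that is
injective on `B`, extend it to a homomorphism of right `S¹`-acts `S¹ → Option C` sending the
adjoined identity to the new point `none`, on which `s ∈ S` acts as `none · s = some (f s)`. The
image of `B` is a nonzero right ideal of `S¹` on which the extension is still injective, so right
uniformity of `S¹` makes the extension, hence `f`, injective.
-/

namespace WithOne

variable {S C : Type u}

def extendAct (actC : C → S → C) (f : S → C) (d : Option C) : WithOne S → Option C :=
  WithOne.recOneCoe d fun s => some (d.elim (f s) (actC · s))

def extendHom (f : S → C) : WithOne S → Option C :=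
  WithOne.recOneCoe none fun s => some (f s)

variable {actC : C → S → C} {f : S → C}

@[simp] theorem extendAct_one (d : Option C) : extendAct actC f d 1 = d := rfl

@[simp] theorem extendAct_none_coe (s : S) : extendAct actC f none s = some (f s) := rfl

@[simp] theorem extendAct_some_coe (c : C) (s : S) :
    extendAct actC f (some c) s = some (actC c s) := rfl

@[simp] theorem extendHom_one : extendHom f 1 = none := rfl

@[simp] theorem extendHom_coe (s : S) : extendHom f s = some (f s) := rfl

theorem injOn_extendHom_image_coe {B : Set S} (hf : Set.InjOn f B) :
    Set.InjOn (extendHom f) (((↑) : S → WithOne S) '' B) := by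
  rintro _ ⟨b, hb, rfl⟩ _ ⟨b', hb', rfl⟩ h
  exact congrArg _ (hf hb hb' (Option.some_injective _ h))

theorem injective_of_injective_extendHom (hf : Function.Injective (extendHom f)) :
    Function.Injective f :=
  fun _ _ h => coe_inj.mp (hf (congrArg some h))

variable [Semigroup S]

theorem isSubact_image_coe {B : Set S} (hB : IsSubact (fun a s : S => a * s) B) :
    IsSubact (fun a s : WithOne S => a * s) (((↑) : S → WithOne S) '' B) := by
  refine ⟨hB.1.image _, ?_⟩
  rintro _ ⟨b, hb, rfl⟩ s
  induction s using WithOne.recOneCoe with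
  | one => exact ⟨b, hb, (mul_one _).symm⟩
  | coe s => exact ⟨b * s, hB.2 b hb s, coe_mul b s⟩

theorem isZeroElem_coe_iff {b : S} :
    IsZeroElem (fun a s : WithOne S => a * s) (b : WithOne S) ↔
      IsZeroElem (fun a s : S => a * s) b := by
  refine ⟨fun h s => coe_inj.mp ((coe_mul b s).trans (h s)), fun h s => ?_⟩
  induction s using WithOne.recOneCoe with
  | one => exact mul_one _
  | coe s => exact (coe_mul b s).symm.trans (congrArg _ (h s))

theorem isRightAct_extendAct (hC : IsRightAct S actC)
    (hf : IsActHom (fun a s : S => a * s) actC f) :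
    IsRightAct (WithOne S) (extendAct actC f) := by
  intro d x y
  induction y using WithOne.recOneCoe with
  | one => simp
  | coe t =>
    induction x using WithOne.recOneCoe with
    | one => simp
    | coe s =>
      cases d with
      | none => simp [← coe_mul, hf s t]
      | some c => simp [← coe_mul, hC c s t]

theorem isActHom_extendHom (hf : IsActHom (fun a s : S => a * s) actC f) :
    IsActHom (fun a s : WithOne S => a * s) (extendAct actC f) (extendHom f) := by
  intro a x
  induction x using WithOne.recOneCoe with
  | one => simp
  | coe s =>
    induction a using WithOne.recOneCoe with
    | one => simp
    | coe a => simp [← coe_mul, hf a s]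

end WithOne

theorem stmt3 {S : Type u} [Semigroup S] (h : RightUniform (WithOne S)) :
    RightUniform S := by
  intro B hB ⟨b, hb, hbz⟩ C actC hC f hf hinj
  exact WithOne.injective_of_injective_extendHom <|
    h _ (WithOne.isSubact_image_coe hB)
      ⟨b, ⟨b, hb, rfl⟩, mt WithOne.isZeroElem_coe_iff.mp hbz⟩
      (Option C) _ (WithOne.isRightAct_extendAct hC hf) _ (WithOne.isActHom_extendHom hf)
      (WithOne.injOn_extendHom_image_coe hinj)
end

section
/- For a semigroup S with no zero element, if S⁰ (S with a zero adjoined) is right uniform, then S is right uniform. -/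
universe u

/-! Given a nonzero subact `B` of `S`, the set `B ∪ {0}` is a nonzero subact of `S⁰`. An
`S`-homomorphism `f : S → C` injective on `B` extends to an `S⁰`-homomorphism `S⁰ → C ∪ {none}`
sending `0` to `none`, which is injective on `B ∪ {0}`; by uniformity of `S⁰` it is injective,
hence so is `f`. -/

namespace WithZero

variable {S C : Type u}

/-- `none` is the adjoined zero of the act; everything acted on by `0 : S⁰` becomes `none`. -/
def optionAct (act : C → S → C) : Option C → WithZero S → Option C
  | some c, some s => some (act c s)
  | _, _ => none

def optionLift (f : S → C) : WithZero S → Option C :=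
  Option.map f

variable {act : C → S → C} {f : S → C}

@[simp] lemma optionAct_none (s : WithZero S) : optionAct act none s = none := rfl

@[simp] lemma optionAct_zero (c : Option C) : optionAct act c 0 = none := by
  cases c <;> rfl

@[simp] lemma optionAct_coe (c : C) (s : S) :
    optionAct act (some c) (s : WithZero S) = some (act c s) :=
  rfl

@[simp] lemma optionLift_zero : optionLift f 0 = none := rfl

@[simp] lemma optionLift_coe (s : S) : optionLift f (s : WithZero S) = some (f s) := rfl

lemma injOn_optionLift_insert_zero {B : Set S} (hf : Set.InjOn f B) :
    Set.InjOn (optionLift f) (insert 0 ((↑) '' B)) := by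
  rintro _ (rfl | ⟨s, hs, rfl⟩) _ (rfl | ⟨t, ht, rfl⟩) hst <;>
    simp_all [hf.eq_iff]

variable [Semigroup S]

lemma isRightAct_optionAct (h : IsRightAct S act) : IsRightAct (WithZero S) (optionAct act) := by
  rintro (_ | c) s t
  · rfl
  induction s using WithZero.recZeroCoe <;> induction t using WithZero.recZeroCoe <;>
    simp [← WithZero.coe_mul, h c]

lemma isActHom_optionLift (hf : IsActHom (fun a s : S => a * s) act f) :
    IsActHom (fun a s : WithZero S => a * s) (optionAct act) (optionLift f) := by
  intro a s
  induction a using WithZero.recZeroCoe <;> induction s using WithZero.recZeroCoe <;>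
    simp [← WithZero.coe_mul, hf _]

lemma isSubact_insert_zero {B : Set S} (hB : IsSubact (fun a s : S => a * s) B) :
    IsSubact (fun a s : WithZero S => a * s) (insert 0 ((↑) '' B)) := by
  refine ⟨Set.insert_nonempty _ _, ?_⟩
  rintro _ (rfl | ⟨a, ha, rfl⟩) s
  · simp
  induction s using WithZero.recZeroCoe
  · simp
  · exact .inr ⟨_, hB.2 a ha _, WithZero.coe_mul _ _⟩

lemma not_isZeroElem_coe (s : S) :
    ¬ IsZeroElem (fun a t : WithZero S => a * t) (s : WithZero S) :=
  fun h => WithZero.coe_ne_zero (h 0).symm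

lemma largeIn_of_largeIn_insert_zero {B : Set S}
    (h : LargeIn (fun a s : WithZero S => a * s) (insert 0 ((↑) '' B))) :
    LargeIn (fun a s : S => a * s) B := by
  intro C actC hact f hf hinj x y hxy
  exact WithZero.coe_injective <|
    h (Option C) (optionAct actC) (isRightAct_optionAct hact) (optionLift f)
      (isActHom_optionLift hf) (injOn_optionLift_insert_zero hinj) (by simp [hxy])

end WithZero

open WithZero in
theorem stmt4_general {S : Type u} [Semigroup S]
    (h : RightUniform (WithZero S)) : RightUniform S := by
  intro B hB _
  obtain ⟨b, hb⟩ := hB.1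
  exact largeIn_of_largeIn_insert_zero <|
    h _ (isSubact_insert_zero hB) ⟨b, .inr ⟨b, hb, rfl⟩, not_isZeroElem_coe b⟩

theorem stmt4 {S : Type u} [Semigroup S]
    (hz : ¬ ∃ z : S, ∀ s : S, z * s = z ∧ s * z = z)
    (h : RightUniform (WithZero S)) : RightUniform S :=
  stmt4_general h
end

section
/- If S is a right zero semigroup with two elements, then S is right uniform but S¹ is not right uniform. -/
/-!
In a right zero semigroup `x * y = y`, so every nonempty right ideal is the whole semigroup,
which is trivially large. In `S¹` the ideal `S` contains a nonzero element (`a * b = b ≠ a`),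
yet the homomorphism `S¹ → S` sending `1` to `a` and fixing `S` is injective on `S` only.
-/

universe u

section RightZero

variable {S : Type u} [Semigroup S]

theorem largeIn_univ {A : Type u} (act : A → S → A) : LargeIn act Set.univ :=
  fun _ _ _ _ _ hinj => Set.injOn_univ.mp hinj

theorem IsSubact.eq_univ_of_rightZero (hrz : ∀ x y : S, x * y = y) {B : Set S}
    (hB : IsSubact (fun a s : S => a * s) B) : B = Set.univ := by
  obtain ⟨⟨b, hb⟩, hclosed⟩ := hB
  exact Set.eq_univ_of_forall fun s => hrz b s ▸ hclosed b hb s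

theorem rightUniform_of_rightZero (hrz : ∀ x y : S, x * y = y) : RightUniform S := by
  intro B hB _
  rw [hB.eq_univ_of_rightZero hrz]
  exact largeIn_univ _

def withOneRightAct (c : S) : WithOne S → S :=
  WithOne.recOneCoe c (c * ·)

theorem isRightAct_withOneRightAct : IsRightAct (WithOne S) (withOneRightAct (S := S)) := by
  intro c s t
  induction t using WithOne.recOneCoe with
  | one => simp [withOneRightAct]
  | coe t =>
    induction s using WithOne.recOneCoe with
    | one => simp [withOneRightAct]
    | coe s => simp [withOneRightAct, ← WithOne.coe_mul, mul_assoc]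

theorem isSubact_range_coe [Nonempty S] :
    IsSubact (fun x s : WithOne S => x * s) (Set.range ((↑) : S → WithOne S)) := by
  refine ⟨Set.range_nonempty _, ?_⟩
  rintro _ ⟨x, rfl⟩ s
  induction s using WithOne.recOneCoe with
  | one => exact ⟨x, (mul_one _).symm⟩
  | coe s => exact ⟨x * s, WithOne.coe_mul x s⟩

theorem WithOne.mul_coe_of_rightZero (hrz : ∀ x y : S, x * y = y) (x : WithOne S) (t : S) :
    x * (t : WithOne S) = t := by
  induction x using WithOne.recOneCoe with
  | one => exact one_mul _
  | coe x => rw [← WithOne.coe_mul, hrz]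

theorem isActHom_recOneCoe_of_rightZero (hrz : ∀ x y : S, x * y = y) (a : S) :
    IsActHom (fun x s : WithOne S => x * s) withOneRightAct (WithOne.recOneCoe a id) := by
  intro x s
  induction s using WithOne.recOneCoe with
  | one => simp [withOneRightAct]
  | coe s => simp [withOneRightAct, WithOne.mul_coe_of_rightZero hrz, hrz]

theorem not_rightUniform_withOne_of_rightZero (hrz : ∀ x y : S, x * y = y) {a b : S}
    (hab : a ≠ b) : ¬ RightUniform (WithOne S) := by
  have : Nonempty S := ⟨a⟩
  intro h
  have hnonzero : ¬ IsZeroElem (fun x s : WithOne S => x * s) (a : WithOne S) := fun hz =>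
    hab (WithOne.coe_inj.mp ((WithOne.mul_coe_of_rightZero hrz _ b).symm.trans (hz b))).symm
  have hinjOn : Set.InjOn (WithOne.recOneCoe a id) (Set.range ((↑) : S → WithOne S)) := by
    rintro _ ⟨x, rfl⟩ _ ⟨y, rfl⟩ hxy
    exact congrArg _ hxy
  have hinj := h _ isSubact_range_coe ⟨a, ⟨a, rfl⟩, hnonzero⟩ S withOneRightAct
    isRightAct_withOneRightAct _ (isActHom_recOneCoe_of_rightZero hrz a) hinjOn
  exact WithOne.one_ne_coe (@hinj 1 a rfl)

end RightZero

theorem stmt6 {S : Type u} [Semigroup S] (hrz : ∀ x y : S, x * y = y)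
    (hcard : Nat.card S = 2) :
    RightUniform S ∧ ¬ RightUniform (WithOne S) := by
  obtain ⟨a, b, hab, -⟩ := Nat.card_eq_two_iff.mp hcard
  exact ⟨rightUniform_of_rightZero hrz, not_rightUniform_withOne_of_rightZero hrz hab⟩
end

section
/- Every right uniform semigroup is an E-semigroup: the product of any two idempotents is an idempotent. -/
universe u

/-! An idempotent `e` of a right uniform semigroup is either a left zero or a left identity:
if it is not a left zero, `eS` is a nonzero right ideal, hence large, and left multiplication
by `e` is an endomorphism of `S` fixing `eS` pointwise, hence injective; then `e (e x) = e x`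
forces `e x = x`. Both kinds of idempotent make `e f` idempotent. -/

section RightRegularAct

variable {S : Type u} [Semigroup S]

theorem isRightAct_mul : IsRightAct S (fun (a : S) (s : S) => a * s) :=
  fun a s t => (mul_assoc a s t).symm

theorem isActHom_mul_left (e : S) :
    IsActHom (fun (a : S) (s : S) => a * s) (fun (a : S) (s : S) => a * s) (e * ·) :=
  fun a s => (mul_assoc e a s).symm

theorem isSubact_range_mul_left (e : S) :
    IsSubact (fun (a : S) (s : S) => a * s) (Set.range (e * ·)) :=
  ⟨⟨e * e, e, rfl⟩, by
    rintro _ ⟨s, rfl⟩ t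
    exact ⟨s * t, (mul_assoc e s t).symm⟩⟩

theorem IsIdempotentElem.mul_left_eqOn_range {e : S} (he : IsIdempotentElem e) :
    Set.EqOn (e * ·) id (Set.range (e * ·)) := by
  rintro _ ⟨s, rfl⟩
  simp only [id, ← mul_assoc, he.eq]

end RightRegularAct

theorem RightUniform.isLeftZero_or_isLeftIdentity {S : Type u} [Semigroup S]
    (hu : RightUniform S) {e : S} (he : IsIdempotentElem e) :
    (∀ s, e * s = e) ∨ ∀ x, e * x = x := by
  by_cases hzero : IsZeroElem (fun (a : S) (s : S) => a * s) e
  · exact Or.inl hzero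
  refine Or.inr fun x => ?_
  have hlarge := hu _ (isSubact_range_mul_left e) ⟨e, ⟨e, he.eq⟩, hzero⟩
  have hinj : Function.Injective (e * ·) :=
    hlarge S _ isRightAct_mul _ (isActHom_mul_left e)
      ((Set.injOn_id _).congr he.mul_left_eqOn_range.symm)
  exact hinj (he.mul_left_eqOn_range ⟨x, rfl⟩)

theorem stmt10 {S : Type u} [Semigroup S] (hu : RightUniform S) :
    ∀ e f : S, e * e = e → f * f = f → (e * f) * (e * f) = e * f := by
  intro e f he hf
  rcases hu.isLeftZero_or_isLeftIdentity he with hzero | hid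
  · rw [hzero f, he]
  · rw [hid f, hf]
end

section
/- Let S be a left 0-simple semigroup. Then S is right uniform if and only if S is a 0-group (a group with a zero adjoined). -/
/-!
In a left 0-simple semigroup the left annihilator of `S` is a left ideal other than `S`, hence
`{0}`; so `S a` is a nonzero left ideal, i.e. `S a = S`, for every `a ≠ 0`. This rules out zero
divisors and gives every nonzero element left divisors of anything, in particular some `w` with
`w a = a`. The fixed points of `w * ·` form a nonzero right ideal, on which the quotient of `S`
by the right congruence generated by `x ~ w x` is injective; right uniformity makes the quotient
map injective, so `w` is a left identity, and a left identity with left inverses makes `S \ {0}`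
a group. Conversely, in a 0-group every nonzero right ideal is `S`, so it is trivially large.
-/

universe u

theorem uniformAct_of_subact_eq_univ {S A : Type u} [Semigroup S] {act : A → S → A}
    (h : ∀ B : Set A, IsSubact act B → (∃ b ∈ B, ¬ IsZeroElem act b) → B = Set.univ) :
    UniformAct act := by
  intro B hB hBnz C actC _ f _ hinj x y hxy
  have hB' := h B hB hBnz
  exact hinj (hB' ▸ Set.mem_univ x) (hB' ▸ Set.mem_univ y) hxy

namespace LeftOrbit

variable {S : Type u} [Semigroup S]

/-- The equivalence on `S` generated by `x ~ w * x`. -/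
def setoid (w : S) : Setoid S where
  r x y := ∃ m n : ℕ, (w * ·)^[m] x = (w * ·)^[n] y
  iseqv :=
    { refl := fun _ => ⟨0, 0, rfl⟩
      symm := fun ⟨m, n, h⟩ => ⟨n, m, h.symm⟩
      trans := fun {x y c} ⟨m, n, hxy⟩ ⟨p, q, hyc⟩ => ⟨p + m, n + q, by
        rw [Function.iterate_add_apply, hxy, ← Function.iterate_add_apply, Nat.add_comm,
          Function.iterate_add_apply, hyc, ← Function.iterate_add_apply]⟩ }

theorem setoid_mul_right {w x y : S} (h : setoid w x y) (s : S) : setoid w (x * s) (y * s) := by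
  obtain ⟨m, n, hxy⟩ := h
  have hcomm : Function.Commute (w * ·) (· * s) := fun x => (mul_assoc w x s).symm
  exact ⟨m, n, (hcomm.iterate_left m x).trans
    ((congrArg (· * s) hxy).trans (hcomm.iterate_left n y).symm)⟩

def act (w : S) (q : Quotient (setoid w)) (s : S) : Quotient (setoid w) :=
  Quotient.map' (· * s) (fun _ _ h => setoid_mul_right h s) q

theorem isRightAct_act (w : S) : IsRightAct S (act w) := by
  intro q s t
  induction q using Quotient.ind with
  | _ x => exact congrArg Quotient.mk'' (mul_assoc x s t).symm

theorem isActHom_mk (w : S) : IsActHom (· * ·) (act w) (Quotient.mk (setoid w)) :=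
  fun _ _ => rfl

theorem mk_injOn_fixedPoints (w : S) :
    Set.InjOn (Quotient.mk (setoid w)) {x | w * x = x} := by
  intro x hx y hy hxy
  obtain ⟨m, n, hmn⟩ := Quotient.exact hxy
  rwa [Function.iterate_fixed hx m, Function.iterate_fixed hy n] at hmn

end LeftOrbit

theorem RightUniform.mul_eq_self_of_mul_eq_self {S : Type u} [Semigroup S] {w a : S}
    (huni : RightUniform S) (hwa : w * a = a) (ha : ¬ IsZeroElem (· * ·) a) (x : S) :
    w * x = x := by
  have hsub : IsSubact (· * ·) {y : S | w * y = y} :=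
    ⟨⟨a, hwa⟩, fun b hb s => show w * (b * s) = b * s by rw [← mul_assoc, hb]⟩
  have hinj := huni _ hsub ⟨a, hwa, ha⟩ _ (LeftOrbit.act w) (LeftOrbit.isRightAct_act w) _
    (LeftOrbit.isActHom_mk w) (LeftOrbit.mk_injOn_fixedPoints w)
  exact (hinj (Quotient.sound (⟨1, 0, rfl⟩ : LeftOrbit.setoid w x (w * x)))).symm

section LeftZeroSimple

variable {S : Type u} [Semigroup S] {z : S}

def IsLeftIdeal (I : Set S) : Prop :=
  I.Nonempty ∧ ∀ a ∈ I, ∀ s : S, s * a ∈ I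

/-- Left 0-simplicity with respect to `z`; that `z` is a zero is assumed separately. -/
def IsLeftZeroSimple (z : S) : Prop :=
  (∃ a b : S, a * b ≠ z) ∧ ∀ I : Set S, IsLeftIdeal I → I = {z} ∨ I = Set.univ

theorem IsLeftZeroSimple.eq_of_forall_mul_eq (h : IsLeftZeroSimple z)
    (hzr : ∀ s : S, s * z = z) {x : S} (hx : ∀ s : S, s * x = z) : x = z := by
  obtain ⟨⟨a, b, hab⟩, hsimple⟩ := h
  have hideal : IsLeftIdeal {x : S | ∀ s : S, s * x = z} :=
    ⟨⟨z, hzr⟩, fun x hx t s => by rw [← mul_assoc]; exact hx (s * t)⟩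
  rcases hsimple _ hideal with hann | hann
  · exact hann.subset hx
  · exact absurd (hann.symm.subset (Set.mem_univ b) a) hab

theorem IsLeftZeroSimple.exists_mul_eq (h : IsLeftZeroSimple z)
    (hzero : ∀ s : S, z * s = z ∧ s * z = z) {a : S} (ha : a ≠ z) (b : S) :
    ∃ s : S, s * a = b := by
  have hideal : IsLeftIdeal {x : S | ∃ s : S, s * a = x} :=
    ⟨⟨z, z, (hzero a).1⟩, fun x ⟨s, hs⟩ t => ⟨t * s, by rw [mul_assoc, hs]⟩⟩
  rcases h.2 _ hideal with hSa | hSa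
  · exact absurd (h.eq_of_forall_mul_eq (fun s => (hzero s).2) fun s => hSa.subset ⟨s, rfl⟩) ha
  · exact hSa.symm.subset (Set.mem_univ b)

theorem IsLeftZeroSimple.mul_ne (h : IsLeftZeroSimple z)
    (hzero : ∀ s : S, z * s = z ∧ s * z = z) {a b : S} (ha : a ≠ z) (hb : b ≠ z) :
    a * b ≠ z := by
  intro hab
  have hSb : ∀ y : S, y * b = z := fun y => by
    obtain ⟨s, rfl⟩ := h.exists_mul_eq hzero ha y
    rw [mul_assoc, hab, (hzero s).2]
  obtain ⟨s, rfl⟩ := h.exists_mul_eq hzero hb a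
  exact ha (hSb s)

end LeftZeroSimple

theorem exists_two_sided_inverse {S : Type u} [Semigroup S] {z w : S}
    (hw : ∀ x : S, w * x = x)
    (hinv : ∀ s : S, s ≠ z → ∃ t : S, t ≠ z ∧ t * s = w) :
    ∀ s : S, s ≠ z → ∃ t : S, t ≠ z ∧ s * t = w ∧ t * s = w := by
  intro s hs
  obtain ⟨t, htz, hts⟩ := hinv s hs
  obtain ⟨u, -, hut⟩ := hinv t htz
  have hus : u * w = s := by rw [← hts, ← mul_assoc, hut, hw]
  exact ⟨t, htz, by rw [← hus, mul_assoc, hw t, hut], hts⟩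

theorem stmt13 {S : Type u} [Semigroup S] (z : S)
    (hzero : ∀ s : S, z * s = z ∧ s * z = z)
    (hS2 : ∃ a b : S, a * b ≠ z)
    (hsimple : ∀ I : Set S, (I.Nonempty ∧ ∀ a ∈ I, ∀ s : S, s * a ∈ I) →
      I = {z} ∨ I = Set.univ) :
    RightUniform S ↔
      ((∀ a b : S, a ≠ z → b ≠ z → a * b ≠ z) ∧
       ∃ e : S, e ≠ z ∧ (∀ s : S, s ≠ z → e * s = s ∧ s * e = s) ∧
         ∀ s : S, s ≠ z → ∃ t : S, t ≠ z ∧ s * t = e ∧ t * s = e) := by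
  have h : IsLeftZeroSimple z := ⟨hS2, hsimple⟩
  have hzz : ∀ {a : S}, a ≠ z → ¬ IsZeroElem (· * ·) a :=
    fun {a} ha h0 => ha ((h0 z).symm.trans (hzero a).2)
  constructor
  · intro huni
    obtain ⟨a, b, hab⟩ := hS2
    have ha : a ≠ z := fun h => hab (by rw [h, (hzero b).1])
    obtain ⟨w, hwa⟩ := h.exists_mul_eq hzero ha a
    have hw := huni.mul_eq_self_of_mul_eq_self hwa (hzz ha)
    have hwz : w ≠ z := fun h => ha (by rw [← hw a, h, (hzero a).1])
    have hinv := exists_two_sided_inverse hw fun s hs => by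
      obtain ⟨t, rfl⟩ := h.exists_mul_eq hzero hs w
      exact ⟨t, fun ht => hwz (by rw [ht, (hzero s).1]), rfl⟩
    refine ⟨fun a b => h.mul_ne hzero, w, hwz, fun s hs => ⟨hw s, ?_⟩, hinv⟩
    obtain ⟨t, -, hst, hts⟩ := hinv s hs
    rw [← hts, ← mul_assoc, hst, hw]
  · rintro ⟨-, e, -, he, hinv⟩
    refine uniformAct_of_subact_eq_univ fun B hB ⟨b, hbB, hb⟩ =>
      Set.eq_univ_of_forall fun x => ?_
    obtain ⟨t, -, hbt, -⟩ := hinv b fun hbz => hb fun s => by subst hbz; exact (hzero s).1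
    by_cases hx : x = z
    · simpa only [hx, (hzero b).2] using hB.2 b hbB z
    · simpa only [← mul_assoc, hbt, (he x hx).1] using hB.2 b hbB (t * x)
end

section
/- Let S be a strongly right noetherian right uniform semigroup. Then S is left cancellative, or left nil, or left subelementary (S = L ⊔ C where L is a left ideal all of whose elements are left nilpotent and C is a nonempty subsemigroup of left cancellable elements). -/
universe u

/-- A right congruence on a semigroup. -/
def IsRightCongruence {S : Type u} [Semigroup S] (r : S → S → Prop) : Prop :=
  Equivalence r ∧ ∀ a b : S, r a b → ∀ s : S, r (a * s) (b * s)

/-- Ascending chain condition on right congruences. -/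
def ACCRightCongruences (S : Type u) [Semigroup S] : Prop :=
  ∀ f : ℕ → (S → S → Prop), (∀ n, IsRightCongruence (f n)) →
    (∀ n, ∀ a b : S, f n a b → f (n + 1) a b) →
    ∃ N : ℕ, ∀ n : ℕ, N ≤ n → f n = f N

/-- `spow c n` is the power `c ^ (n + 1)` in a semigroup. -/
def spow {S : Type u} [Semigroup S] (c : S) : ℕ → S
  | 0 => c
  | n + 1 => spow c n * c

/-- An element is left nilpotent if some power of it is a left zero. -/
def IsLeftNilpotent {S : Type u} [Semigroup S] (c : S) : Prop :=
  ∃ n : ℕ, ∀ s : S, spow c n * s = spow c n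

/-- The right congruence annihilator of an element. -/
def annRel {S : Type u} [Semigroup S] (c : S) : S → S → Prop :=
  fun s t => c * s = c * t

/-!
For a non-left-cancellable `c`, the annihilators of the powers of `c` form an ascending chain of
right congruences, so they stabilise at some `a = cᴺ`. Then left multiplication by `a` is an
`S`-act endomorphism of `S` that is injective on the right ideal `aS`. If `aS` contained a
non-zero element, it would be large by uniformity, forcing `a`, and hence `c`, to be left
cancellable; so `aS` consists of left zeros, and `c²ᴺ⁺¹ = a * a` is one. Thus every element that
is not left cancellable is left nilpotent; those elements form a left ideal, and the left
cancellable ones a subsemigroup.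
-/

section Powers

variable {S : Type u} [Semigroup S]

lemma mul_spow (c : S) (n : ℕ) : c * spow c n = spow c (n + 1) := by
  induction n with
  | zero => rfl
  | succ n ih => rw [spow, ← mul_assoc, ih]; rfl

lemma spow_mul_spow (c : S) (m k : ℕ) : spow c m * spow c k = spow c (m + k + 1) := by
  induction k with
  | zero => rfl
  | succ k ih => rw [spow, ← mul_assoc, ih]; rfl

lemma IsLeftRegular.of_spow {c : S} {n : ℕ} (h : IsLeftRegular (spow c n)) : IsLeftRegular c := by
  cases n with
  | zero => exact h
  | succ n => exact IsLeftRegular.of_mul (a := spow c n) h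

end Powers

section Annihilators

variable {S : Type u} [Semigroup S]

lemma isRightCongruence_annRel (a : S) : IsRightCongruence (annRel a) :=
  ⟨⟨fun _ => rfl, Eq.symm, Eq.trans⟩, fun u v h s => by
    simp only [annRel, ← mul_assoc] at h ⊢
    rw [h]⟩

lemma annRel_mul_left {a : S} (b : S) {u v : S} (h : annRel a u v) : annRel (b * a) u v := by
  simp only [annRel, mul_assoc] at h ⊢
  rw [h]

lemma ACCRightCongruences.exists_annRel_spow_eq (hacc : ACCRightCongruences S) (c : S) :
    ∃ N, ∀ n, N ≤ n → annRel (spow c n) = annRel (spow c N) :=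
  hacc (fun n => annRel (spow c n)) (fun _ => isRightCongruence_annRel _)
    (fun n _ _ h => mul_spow c n ▸ annRel_mul_left c h)

end Annihilators

lemma RightUniform.isLeftRegular_or_isLeftZero {S : Type u} [Semigroup S] (hu : RightUniform S)
    {a : S} (hinj : Set.InjOn (a * ·) (Set.range (a * ·))) :
    IsLeftRegular a ∨ ∀ s t : S, a * s * t = a * s := by
  have hsubact : IsSubact (fun p q : S => p * q) (Set.range (a * ·)) :=
    ⟨⟨a * a, a, rfl⟩, by
      rintro _ ⟨s, rfl⟩ t
      exact ⟨s * t, (mul_assoc a s t).symm⟩⟩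
  by_cases hzero : ∃ b ∈ Set.range (a * ·), ¬ IsZeroElem (fun p q : S => p * q) b
  · exact Or.inl <| hu _ hsubact hzero S (· * ·) (fun p s t => (mul_assoc p s t).symm)
      (a * ·) (fun s t => (mul_assoc a s t).symm) hinj
  · push Not at hzero
    exact Or.inr fun s => hzero (a * s) ⟨s, rfl⟩

theorem isLeftNilpotent_of_not_isLeftRegular {S : Type u} [Semigroup S]
    (hacc : ACCRightCongruences S) (hu : RightUniform S) {c : S} (hc : ¬ IsLeftRegular c) :
    IsLeftNilpotent c := by
  obtain ⟨N, hN⟩ := hacc.exists_annRel_spow_eq c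
  have hsquare : spow c N * spow c N = spow c (N + N + 1) := spow_mul_spow c N N
  have hinj : Set.InjOn (spow c N * ·) (Set.range (spow c N * ·)) := by
    rintro _ ⟨u, rfl⟩ _ ⟨v, rfl⟩ h
    have h' : annRel (spow c (N + N + 1)) u v := by
      simpa only [annRel, ← hsquare, mul_assoc] using h
    rwa [hN _ (by omega)] at h'
  rcases hu.isLeftRegular_or_isLeftZero hinj with hreg | hzero
  · exact absurd hreg.of_spow hc
  · exact ⟨N + N + 1, hsquare ▸ hzero (spow c N)⟩

theorem stmt14 {S : Type u} [Semigroup S] (hacc : ACCRightCongruences S)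
    (hu : RightUniform S) :
    (∀ c x y : S, c * x = c * y → x = y) ∨
    (∀ s : S, IsLeftNilpotent s) ∨
    (∃ L C : Set S, Disjoint L C ∧ L ∪ C = Set.univ ∧
      L.Nonempty ∧ (∀ a ∈ L, ∀ s : S, s * a ∈ L) ∧ (∀ a ∈ L, IsLeftNilpotent a) ∧
      C.Nonempty ∧ (∀ a ∈ C, ∀ b ∈ C, a * b ∈ C) ∧
      (∀ c ∈ C, ∀ x y : S, c * x = c * y → x = y)) := by
  by_cases hall : ∀ c : S, IsLeftRegular c
  · exact Or.inl fun c _ _ h => hall c h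
  push Not at hall
  obtain ⟨c₀, hc₀⟩ := hall
  by_cases hsome : ∃ c : S, IsLeftRegular c
  · obtain ⟨c₁, hc₁⟩ := hsome
    exact Or.inr <| Or.inr ⟨{a | ¬ IsLeftRegular a}, {a | IsLeftRegular a},
      disjoint_compl_left, Set.compl_union_self _, ⟨c₀, hc₀⟩,
      fun _ ha _ hsa => ha hsa.of_mul, fun _ ha => isLeftNilpotent_of_not_isLeftRegular hacc hu ha,
      ⟨c₁, hc₁⟩, fun _ ha _ hb => ha.mul hb, fun c hc _ _ h => hc h⟩
  · push Not at hsome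
    exact Or.inr <| Or.inl fun s => isLeftNilpotent_of_not_isLeftRegular hacc hu (hsome s)
end
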